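/- Let H be a Hilbert space over 𝕜, K₁, K₂ ∈ B(H), and F : Ω → H a Bessel mapping with bound B. Then F ⊕ F : Ω → H ⊕ H (ω ↦ (F ω, F ω)) is a continuous (K₁ ⊕ K₂)-frame for H ⊕ H (for some positive bounds) if and only if K₁ = 0 and K₂ = 0. -/

import Mathlib

open MeasureTheory ContinuousLinearMap

/-- The direct sum operator `K₁ ⊕ K₂` on the super Hilbert space `H ⊕ H`, mapping
`(u, v)` to `(K₁ u, K₂ v)`. -/
noncomputable def prodOp {𝕜 : Type*} [RCLike 𝕜]
    {H₁ : Type*} [NormedAddCommGroup H₁] [InnerProductSpace 𝕜 H₁]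
    {H₂ : Type*} [NormedAddCommGroup H₂] [InnerProductSpace 𝕜 H₂]
    (K₁ : H₁ →L[𝕜] H₁) (K₂ : H₂ →L[𝕜] H₂) :
    WithLp 2 (H₁ × H₂) →L[𝕜] WithLp 2 (H₁ × H₂) :=
  ((WithLp.prodContinuousLinearEquiv 2 𝕜 H₁ H₂).symm.toContinuousLinearMap).comp
    ((K₁.prodMap K₂).comp (WithLp.prodContinuousLinearEquiv 2 𝕜 H₁ H₂).toContinuousLinearMap)

/-! The frame vector `(F ω, F ω)` is orthogonal to every antidiagonal vector `(u, -u)`, so the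
lower frame bound forces `(K₁ ⊕ K₂)* (u, -u) = (K₁* u, -K₂* u)` to vanish for all `u`. Conversely
`⟪(F ω, F ω), (u, v)⟫ = ⟪F ω, u + v⟫`, so `F ⊕ F` inherits the Bessel bound `2B`, and for
`K₁ = K₂ = 0` the lower frame inequality is trivial. -/

section ProdOp

variable {𝕜 : Type*} [RCLike 𝕜]
  {H₁ : Type*} [NormedAddCommGroup H₁] [InnerProductSpace 𝕜 H₁]
  {H₂ : Type*} [NormedAddCommGroup H₂] [InnerProductSpace 𝕜 H₂]

@[simp]
lemma prodOp_fst (K₁ : H₁ →L[𝕜] H₁) (K₂ : H₂ →L[𝕜] H₂) (x : WithLp 2 (H₁ × H₂)) :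
    (prodOp K₁ K₂ x).fst = K₁ x.fst := rfl

@[simp]
lemma prodOp_snd (K₁ : H₁ →L[𝕜] H₁) (K₂ : H₂ →L[𝕜] H₂) (x : WithLp 2 (H₁ × H₂)) :
    (prodOp K₁ K₂ x).snd = K₂ x.snd := rfl

@[simp]
lemma prodOp_zero : prodOp (0 : H₁ →L[𝕜] H₁) (0 : H₂ →L[𝕜] H₂) = 0 := by
  ext; rfl

lemma adjoint_prodOp [CompleteSpace H₁] [CompleteSpace H₂]
    (K₁ : H₁ →L[𝕜] H₁) (K₂ : H₂ →L[𝕜] H₂) :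
    adjoint (prodOp K₁ K₂) = prodOp (adjoint K₁) (adjoint K₂) := by
  refine ((eq_adjoint_iff _ _).mpr fun x y => ?_).symm
  simp only [WithLp.prod_inner_apply, WithLp.ofLp_fst, WithLp.ofLp_snd, prodOp_fst, prodOp_snd,
    adjoint_inner_left]

end ProdOp

section Diagonal

variable {𝕜 : Type*} [RCLike 𝕜] {H : Type*} [NormedAddCommGroup H] [InnerProductSpace 𝕜 H]

lemma inner_diag_left (f : H) (x : WithLp 2 (H × H)) :
    inner 𝕜 ((WithLp.equiv 2 (H × H)).symm (f, f)) x = inner 𝕜 f (x.fst + x.snd) := by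
  simp [inner_add_right]

lemma inner_diag_antidiag (f u : H) :
    inner 𝕜 ((WithLp.equiv 2 (H × H)).symm (f, f)) ((WithLp.equiv 2 (H × H)).symm (u, -u)) =
      (0 : 𝕜) := by
  simp

lemma prodOp_antidiag_eq_zero_iff (K₁ K₂ : H →L[𝕜] H) (u : H) :
    prodOp K₁ K₂ ((WithLp.equiv 2 (H × H)).symm (u, -u)) = 0 ↔ K₁ u = 0 ∧ K₂ u = 0 := by
  rw [← (WithLp.equiv 2 (H × H)).injective.eq_iff, Prod.ext_iff]
  simp

lemma norm_fst_add_snd_sq_le (x : WithLp 2 (H × H)) :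
    ‖x.fst + x.snd‖ ^ 2 ≤ 2 * ‖x‖ ^ 2 := by
  have := norm_add_le x.fst x.snd
  rw [WithLp.prod_norm_sq_eq_of_L2]
  nlinarith [norm_nonneg (x.fst + x.snd), sq_nonneg (‖x.fst‖ - ‖x.snd‖)]

lemma integral_inner_diag_sq_le {Ω : Type*} [MeasurableSpace Ω] {μ : Measure Ω}
    {F : Ω → H} {B : ℝ} (hB : 0 ≤ B)
    (hbound : ∀ u : H, ∫ ω, ‖(inner 𝕜 (F ω) u : 𝕜)‖ ^ 2 ∂μ ≤ B * ‖u‖ ^ 2)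
    (x : WithLp 2 (H × H)) :
    ∫ ω, ‖(inner 𝕜 ((WithLp.equiv 2 (H × H)).symm (F ω, F ω)) x : 𝕜)‖ ^ 2 ∂μ ≤
      2 * B * ‖x‖ ^ 2 := by
  simp_rw [inner_diag_left]
  calc _ ≤ B * ‖x.fst + x.snd‖ ^ 2 := hbound _
    _ ≤ B * (2 * ‖x‖ ^ 2) := by gcongr; exact norm_fst_add_snd_sq_le x
    _ = 2 * B * ‖x‖ ^ 2 := by ring

end Diagonal

theorem diagonal_prod_K_frame_iff_zero_general
    {𝕜 : Type*} [RCLike 𝕜]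
    {H : Type*} [NormedAddCommGroup H] [InnerProductSpace 𝕜 H] [CompleteSpace H]
    {Ω : Type*} [MeasurableSpace Ω] {μ : Measure Ω}
    (K₁ K₂ : H →L[𝕜] H) (F : Ω → H) (B : ℝ) (hB : 0 < B)
    (hbound : ∀ u : H, ∫ ω, ‖(inner 𝕜 (F ω) u : 𝕜)‖ ^ 2 ∂μ ≤ B * ‖u‖ ^ 2) :
    (∃ A B' : ℝ, 0 < A ∧ A ≤ B' ∧ ∀ x : WithLp 2 (H × H),
      A * ‖ContinuousLinearMap.adjoint (prodOp K₁ K₂) x‖ ^ 2 ≤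
        ∫ ω, ‖(inner 𝕜 ((WithLp.equiv 2 (H × H)).symm (F ω, F ω)) x : 𝕜)‖ ^ 2 ∂μ ∧
      ∫ ω, ‖(inner 𝕜 ((WithLp.equiv 2 (H × H)).symm (F ω, F ω)) x : 𝕜)‖ ^ 2 ∂μ ≤
        B' * ‖x‖ ^ 2) ↔
    (K₁ = 0 ∧ K₂ = 0) := by
  constructor
  · rintro ⟨A, B', hA, -, hframe⟩
    have hker (u : H) : adjoint K₁ u = 0 ∧ adjoint K₂ u = 0 := by
      have hlower := (hframe ((WithLp.equiv 2 (H × H)).symm (u, -u))).1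
      simp only [inner_diag_antidiag, norm_zero, integral_zero, ne_eq, OfNat.ofNat_ne_zero,
        not_false_eq_true, zero_pow] at hlower
      rw [← prodOp_antidiag_eq_zero_iff, ← adjoint_prodOp, ← norm_eq_zero]
      exact (sq_nonpos_iff _).mp (le_of_mul_le_mul_left (by simpa using hlower) hA)
    exact ⟨adjoint.map_eq_zero_iff.mp (ext fun u => (hker u).1),
      adjoint.map_eq_zero_iff.mp (ext fun u => (hker u).2)⟩
  · rintro ⟨rfl, rfl⟩
    refine ⟨B, 2 * B, hB, by linarith, fun x => ⟨?_, integral_inner_diag_sq_le hB.le hbound x⟩⟩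
    simpa using integral_nonneg fun ω => by positivity

/-- For a Bessel mapping `F : Ω → H` with bound `B`, the diagonal map
`F ⊕ F : Ω → H ⊕ H` is a continuous `(K₁ ⊕ K₂)`-frame (for some positive bounds) if and
only if `K₁ = 0` and `K₂ = 0`. -/
theorem diagonal_prod_K_frame_iff_zero
    {𝕜 : Type*} [RCLike 𝕜] [MeasurableSpace 𝕜] [BorelSpace 𝕜]
    {H : Type*} [NormedAddCommGroup H] [InnerProductSpace 𝕜 H] [CompleteSpace H]
    {Ω : Type*} [MeasurableSpace Ω] {μ : Measure Ω}
    (K₁ K₂ : H →L[𝕜] H) (F : Ω → H) (B : ℝ) (hB : 0 < B)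
    (hmeas : ∀ u : H, Measurable fun ω => (inner 𝕜 (F ω) u : 𝕜))
    (hbound : ∀ u : H, ∫ ω, ‖(inner 𝕜 (F ω) u : 𝕜)‖ ^ 2 ∂μ ≤ B * ‖u‖ ^ 2) :
    (∃ A B' : ℝ, 0 < A ∧ A ≤ B' ∧ ∀ x : WithLp 2 (H × H),
      A * ‖ContinuousLinearMap.adjoint (prodOp K₁ K₂) x‖ ^ 2 ≤
        ∫ ω, ‖(inner 𝕜 ((WithLp.equiv 2 (H × H)).symm (F ω, F ω)) x : 𝕜)‖ ^ 2 ∂μ ∧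
      ∫ ω, ‖(inner 𝕜 ((WithLp.equiv 2 (H × H)).symm (F ω, F ω)) x : 𝕜)‖ ^ 2 ∂μ ≤
        B' * ‖x‖ ^ 2) ↔
    (K₁ = 0 ∧ K₂ = 0) :=
  diagonal_prod_K_frame_iff_zero_general K₁ K₂ F B hB hbound
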